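/- Define Q^α_0(φ) := ⟨α⟩φ and Q^α_{k+1}(φ) := ⟨α⟩(φ ∧ Q^α_k(φ)). Then for every worm A, every k ∈ ℕ and β ≤ α, GLP_Λ derives ⟨α+1⟩A → Q^α_k(A), and Q^α_{k+1}(A) <_β ⟨α+1⟩A, where B <_β C means GLP_Λ ⊢ C → ⟨β⟩B. -/
import Mathlib


/-- Formulas of the polymodal provability logic `GLP_Λ`, with modalities
indexed by ordinals.  Other connectives are defined from `⊥`, `→` and `[α]`. -/
inductive GLPFormula : Type 1 where
  | bot : GLPFormula
  | impl : GLPFormula → GLPFormula → GLPFormula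
  | box : Ordinal → GLPFormula → GLPFormula

namespace GLPFormula

def neg (φ : GLPFormula) : GLPFormula := impl φ bot
def top : GLPFormula := neg bot
def conj (φ ψ : GLPFormula) : GLPFormula := neg (impl φ (neg ψ))
def iff' (φ ψ : GLPFormula) : GLPFormula := conj (impl φ ψ) (impl ψ φ)
def dia (α : Ordinal) (φ : GLPFormula) : GLPFormula := neg (box α (neg φ))

end GLPFormula

open GLPFormula

/-- Hilbert-style provability in `GLP_Λ`: classical tautologies, `GL` for each
modality `[α]` with `α < Λ`, monotonicity `[β]φ → [α]φ` and negative
introspection `⟨β⟩φ → [α]⟨β⟩φ` for `β < α < Λ`. -/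
inductive GLP (Λ : Ordinal) : GLPFormula → Prop where
  | ax1 (φ ψ) : GLP Λ (impl φ (impl ψ φ))
  | ax2 (φ ψ χ) : GLP Λ (impl (impl φ (impl ψ χ)) (impl (impl φ ψ) (impl φ χ)))
  | ax3 (φ ψ) : GLP Λ (impl (impl (neg φ) (neg ψ)) (impl ψ φ))
  | dist {α} (h : α < Λ) (φ ψ) :
      GLP Λ (impl (box α (impl φ ψ)) (impl (box α φ) (box α ψ)))
  | lob {α} (h : α < Λ) (φ) : GLP Λ (impl (box α (impl (box α φ) φ)) (box α φ))
  | mono {α β} (hβα : β < α) (hα : α < Λ) (φ) : GLP Λ (impl (box β φ) (box α φ))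
  | introspec {α β} (hβα : β < α) (hα : α < Λ) (φ) :
      GLP Λ (impl (dia β φ) (box α (dia β φ)))
  | mp {φ ψ} : GLP Λ (impl φ ψ) → GLP Λ φ → GLP Λ ψ
  | nec {α} (h : α < Λ) {φ} : GLP Λ φ → GLP Λ (box α φ)

/-- Worms are iterated diamonds over `⊤`; we identify a worm with its list of
ordinal modalities (leftmost/outermost first). -/
def wormFormula : List Ordinal → GLPFormula
  | [] => GLPFormula.top
  | α :: A => dia α (wormFormula A)

/-- The formulas `Q^α_k(φ)`: `Q^α_0(φ) = ⟨α⟩φ`, `Q^α_{k+1}(φ) = ⟨α⟩(φ ∧ Q^α_k(φ))`. -/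
def Q (α : Ordinal) : ℕ → GLPFormula → GLPFormula
  | 0, φ => dia α φ
  | k + 1, φ => dia α (conj φ (Q α k φ))

namespace GLP

variable {Λ α β : Ordinal} {φ ψ χ : GLPFormula}

theorem d1 (h : GLP Λ φ) (ψ) : GLP Λ (impl ψ φ) := mp (ax1 _ _) h

theorem mp2 (h1 : GLP Λ (impl φ (impl ψ χ))) (h2 : GLP Λ (impl φ ψ)) :
    GLP Λ (impl φ χ) := mp (mp (ax2 _ _ _) h1) h2

theorem refl' (φ) : GLP Λ (impl φ φ) := mp2 (ax1 φ (impl φ φ)) (ax1 φ φ)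

theorem syll (h1 : GLP Λ (impl φ ψ)) (h2 : GLP Λ (impl ψ χ)) :
    GLP Λ (impl φ χ) := mp2 (d1 h2 φ) h1

theorem flip' (h : GLP Λ (impl φ (impl ψ χ))) : GLP Λ (impl ψ (impl φ χ)) :=
  syll (ax1 ψ φ) (mp (ax2 _ _ _) h)

theorem imp_trans_left (h : GLP Λ (impl φ ψ)) (χ) :
    GLP Λ (impl (impl ψ χ) (impl φ χ)) :=
  flip' (syll h (flip' (refl' (impl ψ χ))))

theorem dni : GLP Λ (impl φ (neg (neg φ))) := flip' (refl' (neg φ))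

theorem dne : GLP Λ (impl (neg (neg φ)) φ) := mp (ax3 _ _) dni

theorem contrapose (h : GLP Λ (impl φ ψ)) : GLP Λ (impl (neg ψ) (neg φ)) :=
  imp_trans_left h bot

theorem efq (φ) : GLP Λ (impl bot φ) := mp (ax3 _ _) (d1 (refl' bot) _)

theorem imp_mono_right (h : GLP Λ (impl ψ χ)) (φ) :
    GLP Λ (impl (impl φ ψ) (impl φ χ)) := mp (ax2 _ _ _) (d1 h _)

theorem flip_intl (A B C : GLPFormula) :
    GLP Λ (impl (impl A (impl B C)) (impl B (impl A C))) :=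
  syll (ax2 A B C) (imp_trans_left (ax1 B A) (impl A C))

theorem syll_intl (B C D : GLPFormula) :
    GLP Λ (impl (impl C D) (impl (impl B C) (impl B D))) :=
  syll (ax1 _ B) (ax2 B C D)

theorem contr_intl (B C : GLPFormula) :
    GLP Λ (impl (impl B C) (impl (neg C) (neg B))) :=
  flip' (syll_intl B C bot)

theorem conj_elim_r : GLP Λ (impl (conj φ ψ) ψ) :=
  mp (ax3 _ _) (syll (ax1 (neg ψ) φ) dni)

theorem box_k (hα : α < Λ) (h : GLP Λ (impl φ ψ)) :
    GLP Λ (impl (box α φ) (box α ψ)) := mp (dist hα _ _) (nec hα h)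

theorem dia_k (hα : α < Λ) (h : GLP Λ (impl φ ψ)) :
    GLP Λ (impl (dia α φ) (dia α ψ)) := contrapose (box_k hα (contrapose h))

theorem dia_down (hβα : β < α) (hα : α < Λ) (φ) :
    GLP Λ (impl (dia α φ) (dia β φ)) := contrapose (mono hβα hα (neg φ))

/-- Tautology `ψ → (¬(φ ∧ ψ) → ¬φ)`. -/
theorem conj_taut : GLP Λ (impl ψ (impl (neg (conj φ ψ)) (neg φ))) :=
  syll (flip' (flip_intl φ ψ bot)) (imp_trans_left dne (neg φ))

theorem box_dia_conj (hα : α < Λ) (φ ψ) :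
    GLP Λ (impl (box α ψ) (impl (dia α φ) (dia α (conj φ ψ)))) :=
  syll (syll (box_k hα conj_taut) (dist hα (neg (conj φ ψ)) (neg φ)))
    (contr_intl _ _)

end GLP

/-- For every worm `A`, every `k ∈ ℕ` and `β ≤ α` (with
`α+1 < Λ`), `GLP_Λ` derives `⟨α+1⟩A → Q^α_k(A)`, and
`Q^α_{k+1}(A) <_β ⟨α+1⟩A`, i.e. `GLP_Λ ⊢ ⟨α+1⟩A → ⟨β⟩Q^α_{k+1}(A)`. -/
theorem glp_Q_stepdown (Λ α β : Ordinal) (hβα : β ≤ α) (hα : α + 1 < Λ)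
    (A : List Ordinal) (hA : ∀ γ ∈ A, γ < Λ) (k : ℕ) :
    GLP Λ (impl (dia (α + 1) (wormFormula A)) (Q α k (wormFormula A))) ∧
    GLP Λ (impl (dia (α + 1) (wormFormula A)) (dia β (Q α (k + 1) (wormFormula A)))) := by
  clear hA
  have hsucc : α < α + 1 := by
    rw [Ordinal.add_one_eq_succ]; exact Order.lt_succ α
  have hαΛ : α < Λ := hsucc.trans hα
  set φA := wormFormula A with hφA
  set D := dia (α + 1) φA with hD
  have part1 : ∀ k, GLP Λ (impl D (Q α k φA)) := by
    intro k
    induction k with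
    | zero => exact GLP.dia_down hsucc hα φA
    | succ k ih =>
      obtain ⟨χ, hχ⟩ : ∃ χ, Q α k φA = dia α χ := by
        cases k <;> exact ⟨_, rfl⟩
      have hint : GLP Λ (impl (Q α k φA) (box (α + 1) (Q α k φA))) := by
        rw [hχ]; exact GLP.introspec hsucc hα χ
      have h1 : GLP Λ (impl D (box (α + 1) (Q α k φA))) := GLP.syll ih hint
      have h2 : GLP Λ (impl D (impl D (dia (α + 1) (conj φA (Q α k φA))))) :=
        GLP.syll h1 (GLP.box_dia_conj hα φA (Q α k φA))
      have h3 := GLP.mp2 h2 (GLP.refl' D)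
      exact GLP.syll h3 (GLP.dia_down hsucc hα _)
  have h5 : GLP Λ (impl (Q α (k + 2) φA) (dia α (Q α (k + 1) φA))) :=
    GLP.dia_k hαΛ GLP.conj_elim_r
  have h6 : GLP Λ (impl (dia α (Q α (k + 1) φA)) (dia β (Q α (k + 1) φA))) := by
    rcases hβα.lt_or_eq with h | h
    · exact GLP.dia_down h hαΛ _
    · subst h; exact GLP.refl' _
  exact ⟨part1 k, GLP.syll (GLP.syll (part1 (k + 2)) h5) h6⟩
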